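/- Fix integers 1 ≤ k < n, let a = (1/2)·diag(i I_k, −i I_{n−k}) ∈ u(n), and let q : ℝ → M_{k,(n−k)}(ℂ) be smooth. Set u = [[0, q],[−q*, 0]] ∈ u(n) (block form). Then pointwise [a, u_xx] − (1/2)[u, [u, [a, u]]] = [[0, r],[−r*, 0]] where r = i(q_xx + 2 q q* q). Consequently, for a smooth map q : ℝ² → M_{k,(n−k)}(ℂ) with u = [[0,q],[−q*,0]], u satisfies the second flow equation u_t = [a, u_xx] − (1/2)[u, [u, [a, u]]] if and only if q satisfies the matrix nonlinear Schrödinger equation q_t = i(q_xx + 2 q q* q). -/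

import Mathlib

open Matrix
open scoped ContDiff

attribute [local instance] Matrix.frobeniusNormedAddCommGroup Matrix.frobeniusNormedSpace

/-- The `ℝ`-linear embedding `q ↦ [[0, q],[−q*, 0]]`. -/
noncomputable def Lmap (k m : ℕ) :
    Matrix (Fin k) (Fin m) ℂ →L[ℝ] Matrix (Fin k ⊕ Fin m) (Fin k ⊕ Fin m) ℂ :=
  LinearMap.toContinuousLinearMap
  { toFun := fun q => Matrix.fromBlocks 0 q (-qᴴ) 0
    map_add' := by
      intro x y
      rw [conjTranspose_add]
      simp [Matrix.fromBlocks_add, add_comm]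
    map_smul' := by
      intro c x
      rw [conjTranspose_smul]
      simp [Matrix.fromBlocks_smul] }

lemma Lmap_apply (k m : ℕ) (q : Matrix (Fin k) (Fin m) ℂ) :
    Lmap k m q = Matrix.fromBlocks 0 q (-qᴴ) 0 := rfl

lemma Lmap_inj {k m : ℕ} {B B' : Matrix (Fin k) (Fin m) ℂ}
    (h : Lmap k m B = Lmap k m B') : B = B' := by
  have := congrArg Matrix.toBlocks₁₂ h
  simpa [Lmap_apply, Matrix.toBlocks_fromBlocks₁₂] using this

lemma deriv_Lmap {k m : ℕ} (f : ℝ → Matrix (Fin k) (Fin m) ℂ) (x : ℝ)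
    (hf : DifferentiableAt ℝ f x) :
    deriv (fun y => Lmap k m (f y)) x = Lmap k m (deriv f x) :=
  (((Lmap k m).hasFDerivAt).comp_hasDerivAt x hf.hasDerivAt).deriv

/-- The core block-matrix algebra computation. -/
lemma core_blocks {k m : ℕ} (Q P : Matrix (Fin k) (Fin m) ℂ)
    (a : Matrix (Fin k ⊕ Fin m) (Fin k ⊕ Fin m) ℂ)
    (ha : a = Matrix.fromBlocks ((Complex.I / 2) • 1) 0 0 ((-(Complex.I / 2)) • 1)) :
    (a * Lmap k m P - Lmap k m P * a)
      - (1 / 2 : ℂ) • (Lmap k m Q * (Lmap k m Q * (a * Lmap k m Q - Lmap k m Q * a)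
            - (a * Lmap k m Q - Lmap k m Q * a) * Lmap k m Q)
          - (Lmap k m Q * (a * Lmap k m Q - Lmap k m Q * a)
            - (a * Lmap k m Q - Lmap k m Q * a) * Lmap k m Q) * Lmap k m Q)
      = Lmap k m (Complex.I • (P + (2 : ℂ) • (Q * Qᴴ * Q))) := by
  subst ha
  simp only [Lmap_apply, sub_eq_add_neg, Matrix.fromBlocks_multiply, Matrix.fromBlocks_smul,
    Matrix.fromBlocks_add, Matrix.fromBlocks_neg, conjTranspose_smul, conjTranspose_add,
    conjTranspose_mul, conjTranspose_conjTranspose, conjTranspose_neg]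
  rw [Matrix.fromBlocks_inj]
  refine ⟨?_, ?_, ?_, ?_⟩ <;>
  · simp only [Matrix.mul_add, Matrix.add_mul, Matrix.smul_mul, Matrix.mul_smul, smul_smul,
      Matrix.mul_assoc, Matrix.mul_zero, Matrix.zero_mul, Matrix.neg_mul, Matrix.mul_neg,
      smul_zero, neg_zero, add_zero, zero_add, neg_neg, smul_neg, Matrix.mul_one, Matrix.one_mul,
      neg_add, Complex.star_def, Complex.conj_I, map_ofNat]
    try module

/-- Fix `1 ≤ k < n` and let `a = (1/2)·diag(i I_k, −i I_{n−k}) ∈ u(n)`.  For smooth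
`q : ℝ → M_{k,(n−k)}(ℂ)` and `u = [[0, q],[−q*, 0]]`, pointwise
`[a, u_xx] − (1/2)[u,[u,[a,u]]] = [[0, r],[−r*, 0]]` with `r = i(q_xx + 2 q q* q)`.
Consequently for smooth `q : ℝ² → M_{k,(n−k)}(ℂ)`, `u` satisfies
`u_t = [a, u_xx] − (1/2)[u,[u,[a,u]]]` iff `q` satisfies the matrix NLS
`q_t = i(q_xx + 2 q q* q)`. -/
theorem stmt_4 (n k : ℕ) (hk : 1 ≤ k) (hkn : k < n)
    (a : Matrix (Fin k ⊕ Fin (n - k)) (Fin k ⊕ Fin (n - k)) ℂ)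
    (ha : a = Matrix.fromBlocks ((Complex.I / 2) • 1) 0 0 ((-(Complex.I / 2)) • 1))
    (q : ℝ → Matrix (Fin k) (Fin (n - k)) ℂ)
    (hq : ContDiff ℝ ∞ q)
    (u : ℝ → Matrix (Fin k ⊕ Fin (n - k)) (Fin k ⊕ Fin (n - k)) ℂ)
    (hu : ∀ x : ℝ, u x = Matrix.fromBlocks 0 (q x) (-(q x)ᴴ) 0)
    (q2 : ℝ → ℝ → Matrix (Fin k) (Fin (n - k)) ℂ)
    (hq2 : ContDiff ℝ ∞ (Function.uncurry q2))
    (u2 : ℝ → ℝ → Matrix (Fin k ⊕ Fin (n - k)) (Fin k ⊕ Fin (n - k)) ℂ)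
    (hu2 : ∀ x t : ℝ, u2 x t = Matrix.fromBlocks 0 (q2 x t) (-(q2 x t)ᴴ) 0) :
    (∀ x : ℝ,
        (a * deriv (deriv u) x - deriv (deriv u) x * a)
          - (1 / 2 : ℂ) • (u x * (u x * (a * u x - u x * a) - (a * u x - u x * a) * u x)
              - (u x * (a * u x - u x * a) - (a * u x - u x * a) * u x) * u x)
        = Matrix.fromBlocks 0
            (Complex.I • (deriv (deriv q) x + (2 : ℂ) • (q x * (q x)ᴴ * q x)))
            (-(Complex.I • (deriv (deriv q) x + (2 : ℂ) • (q x * (q x)ᴴ * q x)))ᴴ) 0) ∧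
      ((∀ x t : ℝ,
          deriv (fun s => u2 x s) t
            = (a * deriv (fun s => deriv (fun s' => u2 s' t) s) x
                - deriv (fun s => deriv (fun s' => u2 s' t) s) x * a)
              - (1 / 2 : ℂ) • (u2 x t * (u2 x t * (a * u2 x t - u2 x t * a)
                    - (a * u2 x t - u2 x t * a) * u2 x t)
                  - (u2 x t * (a * u2 x t - u2 x t * a)
                    - (a * u2 x t - u2 x t * a) * u2 x t) * u2 x t))
        ↔ (∀ x t : ℝ,
            deriv (fun s => q2 x s) t
              = Complex.I • (deriv (fun s => deriv (fun s' => q2 s' t) s) x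
                  + (2 : ℂ) • (q2 x t * (q2 x t)ᴴ * q2 x t)))) := by
  constructor
  · -- Part 1
    have hu_eq : u = fun x => Lmap k (n - k) (q x) := funext fun x => by rw [hu x, Lmap_apply]
    have hq' : ContDiff ℝ ∞ (deriv q) := (contDiff_infty_iff_deriv.mp hq).2
    have h1 : deriv u = fun x => Lmap k (n - k) (deriv q x) := by
      funext x
      rw [hu_eq]
      exact deriv_Lmap q x ((hq.differentiable (by simp)) x)
    have h2 : ∀ x, deriv (deriv u) x = Lmap k (n - k) (deriv (deriv q) x) := by
      intro x
      rw [h1]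
      exact deriv_Lmap _ x ((hq'.differentiable (by simp)) x)
    intro x
    have e1 : u x = Lmap k (n - k) (q x) := by rw [hu x, Lmap_apply]
    rw [e1, h2 x, ← Lmap_apply]
    exact core_blocks (q x) (deriv (deriv q) x) a ha
  · -- Part 2
    have hg : ∀ t, ContDiff ℝ ∞ (fun x => q2 x t) :=
      fun t => hq2.comp (contDiff_id.prodMk contDiff_const)
    have hgt : ∀ x, ContDiff ℝ ∞ (fun s => q2 x s) :=
      fun x => hq2.comp (contDiff_const.prodMk contDiff_id)
    have e_inner : ∀ t, (fun s => deriv (fun s' => u2 s' t) s)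
        = fun s => Lmap k (n - k) (deriv (fun s' => q2 s' t) s) := by
      intro t
      funext s
      have hx : (fun s' => u2 s' t) = fun s' => Lmap k (n - k) (q2 s' t) :=
        funext fun s' => by rw [hu2 s' t, Lmap_apply]
      rw [hx]
      exact deriv_Lmap _ s (((hg t).differentiable (by simp)) s)
    have e_dd : ∀ x t, deriv (fun s => deriv (fun s' => u2 s' t) s) x
        = Lmap k (n - k) (deriv (fun s => deriv (fun s' => q2 s' t) s) x) := by
      intro x t
      rw [e_inner t]
      have hdq : ContDiff ℝ ∞ (deriv (fun s' => q2 s' t)) :=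
        (contDiff_infty_iff_deriv.mp (hg t)).2
      exact deriv_Lmap _ x ((hdq.differentiable (by simp)) x)
    have e_t : ∀ x t, deriv (fun s => u2 x s) t = Lmap k (n - k) (deriv (fun s => q2 x s) t) := by
      intro x t
      have hx : (fun s => u2 x s) = fun s => Lmap k (n - k) (q2 x s) :=
        funext fun s => by rw [hu2 x s, Lmap_apply]
      rw [hx]
      exact deriv_Lmap _ t (((hgt x).differentiable (by simp)) t)
    have eu : ∀ x t, u2 x t = Lmap k (n - k) (q2 x t) := fun x t => by rw [hu2 x t, Lmap_apply]
    constructor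
    · intro h x t
      have hxt := h x t
      rw [e_t x t, e_dd x t, eu x t,
        core_blocks (q2 x t) (deriv (fun s => deriv (fun s' => q2 s' t) s) x) a ha] at hxt
      exact Lmap_inj hxt
    · intro h x t
      rw [e_t x t, e_dd x t, eu x t,
        core_blocks (q2 x t) (deriv (fun s => deriv (fun s' => q2 s' t) s) x) a ha]
      exact congrArg (Lmap k (n - k)) (h x t)
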